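/- arXiv:1205.5784 — 3 statements merged into one kernel-verified Lean document; each statement's English description precedes it below -/
import Mathlib

section
/- Let $d\ge 3$ and $0<s<d$. Let $\Omega\subset\mathbb{R}^d$ be an open set and suppose $K_t(x,y)$ is a measurable kernel on $\Omega\times\Omega$ satisfying $0\le K_t(x,y)\le \big(\tfrac{d(x)}{\sqrt t\wedge D}\wedge 1\big)\big(\tfrac{d(y)}{\sqrt t\wedge D}\wedge 1\big) t^{-d/2} e^{-c|x-y|^2/t}$ for some constants $c>0$, $D>0$, where $d(z)=\operatorname{dist}(z,\Omega^c)$. Then $\int_0^\infty t^{s/2} K_t(x,y)\,\tfrac{dt}{t} \lesssim \tfrac{1}{|x-y|^{d-s}}\big(\tfrac{d(x)}{|x-y|\wedge D}\wedge 1\big)\big(\tfrac{d(y)}{|x-y|\wedge D}\wedge 1\big)$ uniformly for $x,y\in\Omega$, with implicit constant depending on $d,s,c$ only. -/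
/-!
Write `r = |x - y|`. At time `t` the boundary factor `d(x)/(√t ∧ D) ∧ 1` exceeds the one at
scale `r ∧ D` by at most `max 1 (r/√t)`, so the product of the two boundary factors costs at
most `1 + r²/t`. What remains is `∫₀^∞ t^{(s-d)/2 - 1} (1 + r²/t) e^{-cr²/t} dt`; the
substitution `t = 1/u` turns it into two Gamma integrals, each a multiple of `r^{s-d}`.
-/

open MeasureTheory Real Set Metric

private theorem rpow_sub_one_mul_exp_neg_div_eqOn_comp_inv (β b : ℝ) :
    EqOn (fun x : ℝ => (|(-1 : ℝ)| * x ^ ((-1 : ℝ) - 1)) •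
        ((fun u : ℝ => u ^ (-β - 1) * exp (-(b * u))) (x ^ (-1 : ℝ))))
      (fun t : ℝ => t ^ (β - 1) * exp (-(b / t))) (Ioi 0) := by
  intro x hx
  have hx : 0 < x := hx
  simp only [smul_eq_mul, abs_neg, abs_one, one_mul, rpow_neg_one, inv_rpow hx.le,
    ← rpow_neg hx.le, ← div_eq_mul_inv]
  rw [← mul_assoc, ← rpow_add hx]
  ring_nf

theorem integrableOn_rpow_mul_exp_neg_div {β b : ℝ} (hβ : β < 0) (hb : 0 < b) :
    IntegrableOn (fun t : ℝ => t ^ (β - 1) * exp (-(b / t))) (Ioi 0) := by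
  have hg : IntegrableOn (fun u : ℝ => u ^ (-β - 1) * exp (-(b * u))) (Ioi 0) := by
    simpa using integrableOn_rpow_mul_exp_neg_mul_rpow (p := 1) (by linarith) one_pos hb
  exact ((integrableOn_Ioi_comp_rpow_iff _ (by norm_num)).mpr hg).congr_fun
    (rpow_sub_one_mul_exp_neg_div_eqOn_comp_inv β b) measurableSet_Ioi

theorem integral_rpow_mul_exp_neg_div {β b : ℝ} (hβ : β < 0) (hb : 0 < b) :
    ∫ t in Ioi 0, t ^ (β - 1) * exp (-(b / t)) = b ^ β * Gamma (-β) := by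
  rw [← setIntegral_congr_fun measurableSet_Ioi (rpow_sub_one_mul_exp_neg_div_eqOn_comp_inv β b),
    integral_comp_rpow_Ioi (fun u : ℝ => u ^ (-β - 1) * exp (-(b * u))) (by norm_num),
    integral_rpow_mul_exp_neg_mul_Ioi (by linarith) hb,
    one_div, inv_rpow hb.le, ← rpow_neg hb.le, neg_neg]

private theorem rpow_sub_one_mul_one_add_div_eqOn (β b ρ : ℝ) :
    EqOn (fun t : ℝ => t ^ (β - 1) * (1 + ρ / t) * exp (-(b / t)))
      (fun t => t ^ (β - 1) * exp (-(b / t)) + ρ * (t ^ (β - 1 - 1) * exp (-(b / t))))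
      (Ioi 0) := by
  intro t ht
  have ht : 0 < t := ht
  simp only [rpow_sub ht, rpow_one]
  field_simp

theorem integrableOn_rpow_mul_one_add_div_mul_exp_neg_div {β b ρ : ℝ} (hβ : β < 0)
    (hb : 0 < b) :
    IntegrableOn (fun t : ℝ => t ^ (β - 1) * (1 + ρ / t) * exp (-(b / t))) (Ioi 0) :=
  ((integrableOn_rpow_mul_exp_neg_div hβ hb).add
    ((integrableOn_rpow_mul_exp_neg_div (by linarith) hb).const_mul ρ)).congr_fun
    (rpow_sub_one_mul_one_add_div_eqOn β b ρ).symm measurableSet_Ioi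

theorem integral_rpow_mul_one_add_div_mul_exp_neg_mul_div {β c ρ : ℝ} (hβ : β < 0)
    (hc : 0 < c) (hρ : 0 < ρ) :
    ∫ t in Ioi 0, t ^ (β - 1) * (1 + ρ / t) * exp (-(c * ρ / t)) =
      (c ^ β * Gamma (-β) + c ^ (β - 1) * Gamma (1 - β)) * ρ ^ β := by
  have hβ' : β - 1 < 0 := by linarith
  have hcρ : 0 < c * ρ := mul_pos hc hρ
  rw [setIntegral_congr_fun measurableSet_Ioi (rpow_sub_one_mul_one_add_div_eqOn β _ ρ),
    integral_add (integrableOn_rpow_mul_exp_neg_div hβ hcρ)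
      ((integrableOn_rpow_mul_exp_neg_div hβ' hcρ).const_mul ρ),
    integral_const_mul, integral_rpow_mul_exp_neg_div hβ hcρ,
    integral_rpow_mul_exp_neg_div hβ' hcρ, mul_rpow hc.le hρ.le, mul_rpow hc.le hρ.le,
    rpow_sub_one hρ.ne', neg_sub]
  field_simp

theorem min_div_le_max_one_div_mul_min_div {m σ ρ : ℝ} (hm : 0 ≤ m) (hρ : 0 < ρ) :
    min (m / σ) 1 ≤ max 1 (ρ / σ) * min (m / ρ) 1 := by
  rcases le_total m ρ with h | h
  · rw [min_eq_left ((div_le_one hρ).mpr h)]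
    calc min (m / σ) 1 ≤ m / σ := min_le_left _ _
      _ = ρ / σ * (m / ρ) := by field_simp
      _ ≤ max 1 (ρ / σ) * (m / ρ) := by gcongr; exact le_max_right _ _
  · rw [min_eq_right ((one_le_div hρ).mpr h), mul_one]
    exact (min_le_right _ _).trans (le_max_left _ _)

theorem min_div_min_le_max_one_div {u r D : ℝ} (hu : 0 < u) (hD : 0 < D) :
    min r D / min u D ≤ max 1 (r / u) := by
  rcases le_total D u with h | h
  · rw [min_eq_right h]
    exact (div_le_one_of_le₀ (min_le_right _ _) hD.le).trans (le_max_left _ _)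
  · rw [min_eq_left h]
    exact (div_le_div_of_nonneg_right (min_le_left _ _) hu.le).trans (le_max_right _ _)

theorem min_div_min_sqrt_le {m t r D : ℝ} (hm : 0 ≤ m) (ht : 0 < t) (hr : 0 < r) (hD : 0 < D) :
    min (m / min (√t) D) 1 ≤ max 1 (r / √t) * min (m / min r D) 1 := by
  have hu : 0 < √t := sqrt_pos.mpr ht
  calc min (m / min (√t) D) 1
      ≤ max 1 (min r D / min (√t) D) * min (m / min r D) 1 :=
        min_div_le_max_one_div_mul_min_div (σ := min (√t) D) hm (lt_min hr hD)
    _ ≤ max 1 (r / √t) * min (m / min r D) 1 := by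
        refine mul_le_mul_of_nonneg_right ?_ (le_min (by positivity) zero_le_one)
        exact max_le (le_max_left _ _) (min_div_min_le_max_one_div hu hD)

theorem min_div_min_sqrt_mul_le {m n t r D : ℝ} (hm : 0 ≤ m) (hn : 0 ≤ n) (ht : 0 < t)
    (hr : 0 < r) (hD : 0 < D) :
    min (m / min (√t) D) 1 * min (n / min (√t) D) 1 ≤
      (1 + r ^ 2 / t) * (min (m / min r D) 1 * min (n / min r D) 1) := by
  have hmax : max 1 (r / √t) ^ 2 ≤ 1 + r ^ 2 / t := by
    rcases le_total 1 (r / √t) with h | h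
    · rw [max_eq_right h, div_pow, sq_sqrt ht.le]
      linarith [div_nonneg (sq_nonneg r) ht.le]
    · rw [max_eq_left h, one_pow]
      linarith [div_nonneg (sq_nonneg r) ht.le]
  have hfactor : ∀ {m}, 0 ≤ m → 0 ≤ min (m / min r D) 1 := fun hm =>
    le_min (div_nonneg hm (lt_min hr hD).le) zero_le_one
  calc min (m / min (√t) D) 1 * min (n / min (√t) D) 1
      ≤ (max 1 (r / √t) * min (m / min r D) 1) * (max 1 (r / √t) * min (n / min r D) 1) :=
        mul_le_mul (min_div_min_sqrt_le hm ht hr hD) (min_div_min_sqrt_le hn ht hr hD)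
          (le_min (by positivity) zero_le_one) (by positivity)
    _ = max 1 (r / √t) ^ 2 * (min (m / min r D) 1 * min (n / min r D) 1) := by ring
    _ ≤ (1 + r ^ 2 / t) * (min (m / min r D) 1 * min (n / min r D) 1) :=
        mul_le_mul_of_nonneg_right hmax (mul_nonneg (hfactor hm) (hfactor hn))

theorem rpow_mul_le_of_le_zhang_bound {d s c m n t r D k : ℝ} (hm : 0 ≤ m) (hn : 0 ≤ n)
    (ht : 0 < t) (hr : 0 < r) (hD : 0 < D)
    (hk : k ≤ min (m / min (√t) D) 1 * min (n / min (√t) D) 1 * t ^ (-d / 2) *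
      exp (-c * r ^ 2 / t)) :
    t ^ (s / 2 - 1) * k ≤ min (m / min r D) 1 * min (n / min r D) 1 *
      (t ^ ((s - d) / 2 - 1) * (1 + r ^ 2 / t) * exp (-(c * r ^ 2 / t))) := by
  have hpow : t ^ (s / 2 - 1) * t ^ (-d / 2) = t ^ ((s - d) / 2 - 1) := by
    rw [← rpow_add ht]; ring_nf
  calc t ^ (s / 2 - 1) * k
      ≤ t ^ (s / 2 - 1) * ((1 + r ^ 2 / t) * (min (m / min r D) 1 * min (n / min r D) 1) *
          t ^ (-d / 2) * exp (-c * r ^ 2 / t)) := by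
        refine mul_le_mul_of_nonneg_left (hk.trans ?_) (rpow_nonneg ht.le _)
        gcongr ?_ * _ * _
        exact min_div_min_sqrt_mul_le hm hn ht hr hD
    _ = _ := by rw [← hpow, neg_mul, neg_div t]; ring

theorem riesz_potential_bound_general (d : ℕ) (s c : ℝ) (hsd : s < d)
    (hc : 0 < c) :
    ∃ C > 0, ∀ (Ω : Set (EuclideanSpace ℝ (Fin d))), IsOpen Ω → ∀ (D : ℝ), 0 < D →
      ∀ (K : ℝ → EuclideanSpace ℝ (Fin d) → EuclideanSpace ℝ (Fin d) → ℝ),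
      (∀ t, 0 < t → ∀ x ∈ Ω, ∀ y ∈ Ω,
        0 ≤ K t x y ∧
        K t x y ≤ (min (infDist x Ωᶜ / min (Real.sqrt t) D) 1) *
          (min (infDist y Ωᶜ / min (Real.sqrt t) D) 1) *
          t ^ (-(d : ℝ) / 2) * Real.exp (-c * ‖x - y‖ ^ 2 / t)) →
      ∀ x ∈ Ω, ∀ y ∈ Ω, x ≠ y →
        (∫ t in Ioi (0 : ℝ), t ^ (s / 2 - 1) * K t x y) ≤
          C * (1 / ‖x - y‖ ^ ((d : ℝ) - s)) *
            (min (infDist x Ωᶜ / min ‖x - y‖ D) 1) *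
            (min (infDist y Ωᶜ / min ‖x - y‖ D) 1) := by
  set β : ℝ := (s - d) / 2 with hβdef
  have hβ : β < 0 := by rw [hβdef]; linarith
  have hΓ₀ := Gamma_pos_of_pos (neg_pos.2 hβ)
  have hΓ₁ := Gamma_pos_of_pos (by linarith : 0 < 1 - β)
  refine ⟨c ^ β * Gamma (-β) + c ^ (β - 1) * Gamma (1 - β), by positivity, ?_⟩
  intro Ω _ D hD K hK x hx y hy hxy
  set r := ‖x - y‖
  have hr : 0 < r := norm_pos_iff.2 (sub_ne_zero.2 hxy)
  set a := min (infDist x Ωᶜ / min r D) 1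
  set b := min (infDist y Ωᶜ / min r D) 1
  have hr_rpow : (1 : ℝ) / r ^ ((d : ℝ) - s) = (r ^ 2) ^ β := by
    rw [← rpow_natCast, ← rpow_mul hr.le, one_div, ← rpow_neg hr.le, hβdef]; ring_nf
  calc ∫ t in Ioi 0, t ^ (s / 2 - 1) * K t x y
      ≤ ∫ t in Ioi 0, a * b * (t ^ (β - 1) * (1 + r ^ 2 / t) * exp (-(c * r ^ 2 / t))) := by
        refine integral_mono_of_nonneg ?_
          ((integrableOn_rpow_mul_one_add_div_mul_exp_neg_div hβ (by positivity)).const_mul _) ?_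
        all_goals filter_upwards [ae_restrict_mem measurableSet_Ioi] with t ht
        · exact mul_nonneg (rpow_nonneg (le_of_lt ht) _) (hK t ht x hx y hy).1
        · exact rpow_mul_le_of_le_zhang_bound infDist_nonneg infDist_nonneg ht hr hD
            (hK t ht x hx y hy).2
    _ = _ := by
        rw [integral_const_mul, integral_rpow_mul_one_add_div_mul_exp_neg_mul_div hβ hc
          (by positivity), hr_rpow]
        ring

/-- Riesz potential bound: if a kernel `K_t` on an open set `Ω` obeys a Zhang-type heat
kernel upper bound
`0 ≤ K_t(x,y) ≤ (d(x)/(√t ∧ D) ∧ 1)(d(y)/(√t ∧ D) ∧ 1) t^{-d/2} e^{-c|x-y|²/t}`,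
then `∫₀^∞ t^{s/2} K_t(x,y) dt/t ≲_{d,s,c} |x-y|^{s-d} (d(x)/(|x-y| ∧ D) ∧ 1)(d(y)/(|x-y| ∧ D) ∧ 1)`,
where `d(z) = dist(z, Ωᶜ)`. -/
theorem riesz_potential_bound (d : ℕ) (hd : 3 ≤ d) (s c : ℝ) (hs : 0 < s) (hsd : s < d)
    (hc : 0 < c) :
    ∃ C > 0, ∀ (Ω : Set (EuclideanSpace ℝ (Fin d))), IsOpen Ω → ∀ (D : ℝ), 0 < D →
      ∀ (K : ℝ → EuclideanSpace ℝ (Fin d) → EuclideanSpace ℝ (Fin d) → ℝ),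
      (∀ t, 0 < t → ∀ x ∈ Ω, ∀ y ∈ Ω,
        0 ≤ K t x y ∧
        K t x y ≤ (min (infDist x Ωᶜ / min (Real.sqrt t) D) 1) *
          (min (infDist y Ωᶜ / min (Real.sqrt t) D) 1) *
          t ^ (-(d : ℝ) / 2) * Real.exp (-c * ‖x - y‖ ^ 2 / t)) →
      ∀ x ∈ Ω, ∀ y ∈ Ω, x ≠ y →
        (∫ t in Ioi (0 : ℝ), t ^ (s / 2 - 1) * K t x y) ≤
          C * (1 / ‖x - y‖ ^ ((d : ℝ) - s)) *
            (min (infDist x Ωᶜ / min ‖x - y‖ D) 1) *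
            (min (infDist y Ωᶜ / min ‖x - y‖ D) 1) :=
  riesz_potential_bound_general d s c hsd hc
end

section
/- Let $d\ge 2$ and $\nu=(d-2)/2>0$. For $0<\lambda\le 1$ and $r>1$, define $u(r;\lambda) = -r^{-\nu}\big[J_\nu(\lambda r)Y_\nu(\lambda) - J_\nu(\lambda)Y_\nu(\lambda r)\big]$, where $J_\nu, Y_\nu$ are the Bessel functions of the first and second kind. Then $|u(r;\lambda)|\lesssim 1\wedge (\lambda r)^{-(d-1)/2}$ uniformly for $r>1$ and $0<\lambda\le 1$. -/
/-!
Write `x = λr`. Since `r^{-ν} = (λr)^{-ν} λ^ν = r^{-2ν} λ^{-ν} (λr)^ν`, the function `u` is a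
difference of products of the normalised Bessel functions `x^{-ν} J_ν(x) ≲ 1 ∧ x^{-(ν+1/2)}` and
`x^ν Y_ν(x) ≲ 1 ∨ x^{ν-1/2}`. At the argument `λ ≤ 1` both are bounded, so the first product is
`≲ 1 ∧ x^{-(ν+1/2)}` and the second is `≲ r^{-2ν} (1 ∨ x^{ν-1/2})`, which is at most
`1 ∧ x^{-(ν+1/2)}` because `x ≤ r`. Here `ν ≥ 1/2` (as `d ≥ 3`) makes `Y_ν(λ) ≲ λ^{-ν}` for `λ ≤ 1`.
-/

open Real

namespace Real

variable {x : ℝ}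

theorem rpow_neg_mul_min_rpow (hx : 0 < x) (a b : ℝ) :
    x ^ (-a) * min (x ^ a) (x ^ b) = min 1 (x ^ (b - a)) := by
  rw [mul_min_of_nonneg _ _ (rpow_nonneg hx.le _), ← rpow_add hx, ← rpow_add hx, neg_add_cancel,
    rpow_zero, neg_add_eq_sub]

theorem rpow_mul_max_rpow_neg (hx : 0 < x) (a b : ℝ) :
    x ^ a * max (x ^ (-a)) (x ^ b) = max 1 (x ^ (a + b)) := by
  rw [mul_max_of_nonneg _ _ (rpow_nonneg hx.le _), ← rpow_add hx, ← rpow_add hx, add_neg_cancel,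
    rpow_zero]

theorem rpow_neg_add_mul_max_one_rpow_le {r p q : ℝ} (hx : 0 < x) (hxr : x ≤ r) (hr : 1 ≤ r)
    (hp : 0 ≤ p) (hq : 0 ≤ q) :
    r ^ (-(p + q)) * max 1 (x ^ p) ≤ min 1 (x ^ (-q)) := by
  have hr0 : 0 < r := hx.trans_le hxr
  have hmax : max 1 (x ^ p) ≤ r ^ p :=
    max_le (one_le_rpow hr hp) (rpow_le_rpow hx.le hxr hp)
  calc r ^ (-(p + q)) * max 1 (x ^ p)
      ≤ r ^ (-(p + q)) * r ^ p := by gcongr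
    _ = r ^ (-q) := by rw [← rpow_add hr0]; ring_nf
    _ ≤ min 1 (x ^ (-q)) :=
      le_min (rpow_le_one_of_one_le_of_nonpos hr (by linarith))
        (rpow_le_rpow_of_nonpos hx hxr (by linarith))

theorem rpow_neg_mul_abs_le_of_abs_le_mul_min {x ν a C : ℝ} (hx : 0 < x)
    (h : |a| ≤ C * min (x ^ ν) (x ^ (-(1 : ℝ) / 2))) :
    x ^ (-ν) * |a| ≤ C * min 1 (x ^ (-(ν + 1 / 2))) :=
  calc x ^ (-ν) * |a| ≤ x ^ (-ν) * (C * min (x ^ ν) (x ^ (-(1 : ℝ) / 2))) := by gcongr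
    _ = C * min 1 (x ^ (-(ν + 1 / 2))) := by
        rw [mul_left_comm, rpow_neg_mul_min_rpow hx]; ring_nf

theorem rpow_mul_abs_le_of_abs_le_mul_max {x ν a C : ℝ} (hx : 0 < x)
    (h : |a| ≤ C * max (x ^ (-ν)) (x ^ (-(1 : ℝ) / 2))) :
    x ^ ν * |a| ≤ C * max 1 (x ^ (ν - 1 / 2)) :=
  calc x ^ ν * |a| ≤ x ^ ν * (C * max (x ^ (-ν)) (x ^ (-(1 : ℝ) / 2))) := by gcongr
    _ = C * max 1 (x ^ (ν - 1 / 2)) := by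
        rw [mul_left_comm, rpow_mul_max_rpow_neg hx]; ring_nf

end Real

section BesselCross

variable {ν : ℝ} {J Y : ℝ → ℝ} {r lam : ℝ}

theorem abs_rpow_neg_mul_cross_le (hr : 0 < r) (hlam : 0 < lam) :
    |r ^ (-ν) * (J (lam * r) * Y lam - J lam * Y (lam * r))| ≤
      (lam * r) ^ (-ν) * |J (lam * r)| * (lam ^ ν * |Y lam|) +
        r ^ (-(2 * ν)) * ((lam ^ (-ν) * |J lam|) * ((lam * r) ^ ν * |Y (lam * r)|)) := by
  have hsplit₁ : r ^ (-ν) = (lam * r) ^ (-ν) * lam ^ ν := by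
    rw [mul_rpow hlam.le hr.le, rpow_neg hlam.le, rpow_neg hr.le]
    field_simp
  have hsplit₂ : r ^ (-ν) = r ^ (-(2 * ν)) * (lam ^ (-ν) * (lam * r) ^ ν) := by
    rw [mul_rpow hlam.le hr.le, show -(2 * ν) = -ν + -ν by ring, rpow_add hr, rpow_neg hlam.le,
      rpow_neg hr.le]
    field_simp
  calc |r ^ (-ν) * (J (lam * r) * Y lam - J lam * Y (lam * r))|
      ≤ r ^ (-ν) * (|J (lam * r)| * |Y lam| + |J lam| * |Y (lam * r)|) := by
        rw [abs_mul, abs_of_nonneg (rpow_nonneg hr.le _), ← abs_mul, ← abs_mul]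
        gcongr
        exact abs_sub _ _
    _ = _ := by
        rw [mul_add]
        nth_rewrite 1 [hsplit₁]
        rw [hsplit₂]
        ring

theorem abs_rpow_neg_mul_cross_le_of_weighted {CJ CY : ℝ} (hν : 1 / 2 ≤ ν) (hCJ : 0 ≤ CJ)
    (hCY : 0 ≤ CY)
    (hJ : ∀ x, 0 < x → x ^ (-ν) * |J x| ≤ CJ * min 1 (x ^ (-(ν + 1 / 2))))
    (hY : ∀ x, 0 < x → x ^ ν * |Y x| ≤ CY * max 1 (x ^ (ν - 1 / 2)))
    (hr : 1 < r) (hlam : 0 < lam) (hlam1 : lam ≤ 1) :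
    |r ^ (-ν) * (J (lam * r) * Y lam - J lam * Y (lam * r))| ≤
      2 * CJ * CY * min 1 ((lam * r) ^ (-(ν + 1 / 2))) := by
  have hr0 : 0 < r := one_pos.trans hr
  have hx : 0 < lam * r := mul_pos hlam hr0
  have hJlam : lam ^ (-ν) * |J lam| ≤ CJ := by
    have h := hJ lam hlam
    rwa [min_eq_left (one_le_rpow_of_pos_of_le_one_of_nonpos hlam hlam1 (by linarith)),
      mul_one] at h
  have hYlam : lam ^ ν * |Y lam| ≤ CY := by
    have h := hY lam hlam
    rwa [max_eq_left (rpow_le_one hlam.le hlam1 (sub_nonneg.mpr hν)), mul_one] at h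
  have hdecay := rpow_neg_add_mul_max_one_rpow_le hx (mul_le_of_le_one_left hr0.le hlam1) hr.le
    (sub_nonneg.mpr hν) (by linarith : 0 ≤ ν + 1 / 2)
  rw [show ν - 1 / 2 + (ν + 1 / 2) = 2 * ν by ring] at hdecay
  calc |r ^ (-ν) * (J (lam * r) * Y lam - J lam * Y (lam * r))|
      ≤ (lam * r) ^ (-ν) * |J (lam * r)| * (lam ^ ν * |Y lam|) +
        r ^ (-(2 * ν)) * ((lam ^ (-ν) * |J lam|) * ((lam * r) ^ ν * |Y (lam * r)|)) :=
        abs_rpow_neg_mul_cross_le hr0 hlam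
    _ ≤ CJ * min 1 ((lam * r) ^ (-(ν + 1 / 2))) * CY +
        r ^ (-(2 * ν)) * (CJ * (CY * max 1 ((lam * r) ^ (ν - 1 / 2)))) :=
        add_le_add (mul_le_mul (hJ _ hx) hYlam (by positivity) (by positivity))
          (mul_le_mul_of_nonneg_left (mul_le_mul hJlam (hY _ hx) (by positivity) hCJ)
            (by positivity))
    _ = CJ * min 1 ((lam * r) ^ (-(ν + 1 / 2))) * CY +
        CJ * CY * (r ^ (-(2 * ν)) * max 1 ((lam * r) ^ (ν - 1 / 2))) := by ring
    _ ≤ CJ * min 1 ((lam * r) ^ (-(ν + 1 / 2))) * CY +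
        CJ * CY * min 1 ((lam * r) ^ (-(ν + 1 / 2))) := by gcongr
    _ = 2 * CJ * CY * min 1 ((lam * r) ^ (-(ν + 1 / 2))) := by ring

end BesselCross

theorem exterior_eigenfunction_bound_general (d : ℕ)
    (ν : ℝ) (hν : ν = ((d : ℝ) - 2) / 2) (hν0 : 0 < ν)
    (J Y : ℝ → ℝ)
    (hJ : ∃ CJ > 0, ∀ x : ℝ, 0 < x → |J x| ≤ CJ * min (x ^ ν) (x ^ (-(1:ℝ)/2)))
    (hY : ∃ CY > 0, ∀ x : ℝ, 0 < x → |Y x| ≤ CY * max (x ^ (-ν)) (x ^ (-(1:ℝ)/2))) :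
    ∃ C > 0, ∀ r lam : ℝ, 1 < r → 0 < lam → lam ≤ 1 →
      |(-(r ^ (-ν)) * (J (lam * r) * Y lam - J lam * Y (lam * r)))| ≤
        C * min 1 ((lam * r) ^ (-((d : ℝ) - 1) / 2)) := by
  obtain ⟨CJ, hCJ, hJ⟩ := hJ
  obtain ⟨CY, hCY, hY⟩ := hY
  have hd3 : 3 ≤ d := by
    have : (2 : ℝ) < d := by linarith
    exact_mod_cast this
  have hν_half : 1 / 2 ≤ ν := by
    have : (3 : ℝ) ≤ d := by exact_mod_cast hd3
    linarith
  refine ⟨2 * CJ * CY, by positivity, fun r lam hr hlam hlam1 => ?_⟩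
  rw [show -((d : ℝ) - 1) / 2 = -(ν + 1 / 2) by rw [hν]; ring, neg_mul, abs_neg]
  exact abs_rpow_neg_mul_cross_le_of_weighted hν_half hCJ.le hCY.le
    (fun x hx => rpow_neg_mul_abs_le_of_abs_le_mul_min hx (hJ x hx))
    (fun x hx => rpow_mul_abs_le_of_abs_le_mul_max hx (hY x hx)) hr hlam hlam1

/-- Crude bound on the exterior eigenfunctions built from Bessel functions:
assuming the standard bounds `|J_ν(x)| ≲ x^ν ∧ x^{-1/2}` and `|Y_ν(x)| ≲ x^{-ν} ∨ x^{-1/2}`,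
the function `u(r;λ) = -r^{-ν}[J_ν(λr)Y_ν(λ) - J_ν(λ)Y_ν(λr)]` (with `ν = (d-2)/2 > 0`)
satisfies `|u(r;λ)| ≲ 1 ∧ (λr)^{-(d-1)/2}` uniformly for `r > 1`, `0 < λ ≤ 1`. -/
theorem exterior_eigenfunction_bound (d : ℕ) (hd : 2 ≤ d)
    (ν : ℝ) (hν : ν = ((d : ℝ) - 2) / 2) (hν0 : 0 < ν)
    (J Y : ℝ → ℝ)
    (hJ : ∃ CJ > 0, ∀ x : ℝ, 0 < x → |J x| ≤ CJ * min (x ^ ν) (x ^ (-(1:ℝ)/2)))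
    (hY : ∃ CY > 0, ∀ x : ℝ, 0 < x → |Y x| ≤ CY * max (x ^ (-ν)) (x ^ (-(1:ℝ)/2))) :
    ∃ C > 0, ∀ r lam : ℝ, 1 < r → 0 < lam → lam ≤ 1 →
      |(-(r ^ (-ν)) * (J (lam * r) * Y lam - J lam * Y (lam * r)))| ≤
        C * min 1 ((lam * r) ^ (-((d : ℝ) - 1) / 2)) :=
  exterior_eigenfunction_bound_general d ν hν hν0 J Y hJ hY
end

section
/- Let $a:\mathbb{R}\to\mathbb{C}$ be $C^k$ on $(0,\infty)$ satisfying $|a^{(j)}(\theta)|\le A\,\theta^{-j}(1\wedge r\theta)$ for $0\le j\le k$ and all $\theta>0$, for some constants $A,r>0$. Fix $\lambda>0$ and let $P_k(\theta)=\sum_{\ell=1}^{k-1}\frac{a^{(\ell)}(\lambda)}{\ell!}(\theta-\lambda)^\ell$. Then the Taylor remainder $\mathcal{E}(\theta)=a(\theta)-a(\lambda)-P_k(\theta)$ satisfies $|\mathcal{E}(\theta)|\lesssim_k A\,(1\wedge r\lambda)\,\big|\tfrac{\theta-\lambda}{\lambda}\big|^k$ for all $\theta>0$. -/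
/-!
Write `T` for the Taylor polynomial of degree `k - 1` of `a` at `λ`, so that the remainder is
`a θ - T θ`. If `|θ - λ| ≤ λ / 2`, Taylor's theorem bounds the remainder by
`sup |a^{(k)}| · |θ - λ|^k` over `[λ/2, 3λ/2]`, where `θ^{-k} ≤ (2/λ)^k` and
`1 ∧ rθ ≤ (3/2)(1 ∧ rλ)`. If `|θ - λ| > λ / 2`, then `s = 2|θ - λ|/λ ≥ 1`, and `a θ` as well as
every term of `T θ` is bounded by a multiple of `A (1 ∧ rλ)` times a power of `s` of exponent at
most `k`, hence by a multiple of `A (1 ∧ rλ) s^k`.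
-/

open Set
open scoped Nat

variable {E : Type*} [NormedAddCommGroup E] [NormedSpace ℝ E]

theorem norm_sub_taylorWithinEval_univ_le [CompleteSpace E] {f : ℝ → E} {s : Set ℝ}
    (hs : IsOpen s) {n : ℕ} {x₀ x C : ℝ} (hf : ContDiffOn ℝ (n + 1) f s) (hsub : uIcc x₀ x ⊆ s)
    (hC : ∀ y ∈ uIcc x₀ x, ‖iteratedDeriv (n + 1) f y‖ ≤ C) :
    ‖f x - taylorWithinEval f n univ x₀ x‖ ≤ C * |x - x₀| ^ (n + 1) / n ! := by
  rcases eq_or_ne x₀ x with rfl | hne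
  · simp
  have hwithin : ∀ i ≤ n + 1, ∀ y ∈ uIcc x₀ x,
      iteratedDerivWithin i f (uIcc x₀ x) y = iteratedDeriv i f y := fun i hi y hy =>
    iteratedDerivWithin_eq_iteratedDeriv (uniqueDiffOn_uIcc hne)
      ((hf.of_le (by exact_mod_cast hi)).contDiffAt (hs.mem_nhds (hsub hy))) hy
  have htaylor : taylorWithinEval f n univ x₀ x = taylorWithinEval f n (uIcc x₀ x) x₀ x := by
    simp only [taylor_within_apply, iteratedDerivWithin_univ]
    refine Finset.sum_congr rfl fun i hi => ?_
    rw [hwithin i (by grind) x₀ left_mem_uIcc]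
  -- unlike `taylor_mean_remainder_bound`, the integral form of the remainder allows `x < x₀`
  rw [htaylor, taylor_integral_remainder (hf.mono hsub)]
  calc _ ≤ C * |x - x₀| ^ n / n ! * |x - x₀| := by
        refine intervalIntegral.norm_integral_le_of_norm_le_const fun y hy => ?_
        have hy := uIoc_subset_uIcc hy
        rw [norm_smul, norm_div, norm_pow, Real.norm_eq_abs, RCLike.norm_natCast,
          hwithin (n + 1) le_rfl y hy, div_mul_eq_mul_div, mul_comm]
        have hC₀ : 0 ≤ C := (norm_nonneg _).trans (hC x₀ left_mem_uIcc)
        gcongr ?_ * ?_ ^ n / _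
        · exact hC y hy
        · exact abs_sub_right_of_mem_uIcc hy
    _ = C * |x - x₀| ^ (n + 1) / n ! := by ring

theorem norm_taylorWithinEval_univ_le (f : ℝ → E) (n : ℕ) (x₀ x : ℝ) :
    ‖taylorWithinEval f n univ x₀ x‖ ≤
      ∑ i ∈ Finset.range (n + 1), ‖iteratedDeriv i f x₀‖ * |x - x₀| ^ i := by
  rw [taylor_within_apply]
  refine (norm_sum_le _ _).trans (Finset.sum_le_sum fun i _ => ?_)
  rw [norm_smul, iteratedDerivWithin_univ, norm_mul, norm_inv, norm_pow, RCLike.norm_natCast,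
    Real.norm_eq_abs, mul_comm]
  gcongr
  exact mul_le_of_le_one_left (by positivity) (inv_le_one_of_one_le₀ (mod_cast i.factorial_pos))

theorem taylorWithinEval_univ_eq_add_sum_Icc (f : ℝ → ℂ) (n : ℕ) (x₀ x : ℝ) :
    taylorWithinEval f n univ x₀ x = f x₀ + ∑ ℓ ∈ Finset.Icc 1 n,
      iteratedDeriv ℓ f x₀ / (ℓ ! : ℂ) * ((x : ℂ) - x₀) ^ ℓ := by
  rw [taylor_within_apply, Finset.range_eq_Ico, Finset.sum_eq_sum_Ico_succ_bot n.succ_pos,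
    ← Finset.Ico_add_one_right_eq_Icc]
  congr 1
  · simp
  · refine Finset.sum_congr rfl fun i _ => ?_
    rw [iteratedDerivWithin_univ, Complex.real_smul]
    push_cast
    ring

theorem min_one_mul_le_mul_min_one {r x y c : ℝ} (hr : 0 ≤ r) (hc : 1 ≤ c) (hxy : x ≤ c * y) :
    min 1 (r * x) ≤ c * min 1 (r * y) := by
  rw [mul_min_of_nonneg _ _ (by linarith), mul_one]
  exact min_le_min hc (by nlinarith)

section SymbolBound

variable {f : ℝ → E} {n : ℕ} {A r x₀ x : ℝ}

theorem norm_sub_taylorWithinEval_univ_le_of_near [CompleteSpace E] (hA : 0 ≤ A) (hr : 0 ≤ r)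
    (hx₀ : 0 < x₀) (hf : ContDiffOn ℝ (n + 1) f (Ioi 0))
    (hbound : ∀ y, 0 < y → ‖iteratedDeriv (n + 1) f y‖ ≤ A / y ^ (n + 1) * min 1 (r * y))
    (hnear : |x - x₀| ≤ x₀ / 2) :
    ‖f x - taylorWithinEval f n univ x₀ x‖ ≤
      3 / 2 * A * min 1 (r * x₀) * (2 * |x - x₀| / x₀) ^ (n + 1) := by
  obtain ⟨hx₁, hx₂⟩ := abs_le.1 hnear
  have hI : uIcc x₀ x ⊆ Icc (x₀ / 2) (3 / 2 * x₀) :=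
    uIcc_subset_Icc ⟨by linarith, by linarith⟩ ⟨by linarith, by linarith⟩
  have hderiv : ∀ y ∈ uIcc x₀ x,
      ‖iteratedDeriv (n + 1) f y‖ ≤ 3 / 2 * A * min 1 (r * x₀) * (2 / x₀) ^ (n + 1) := by
    intro y hy
    obtain ⟨hy₁, hy₂⟩ := hI hy
    have hy₀ : 0 < y := by linarith
    have hinv : y⁻¹ ≤ 2 / x₀ := by
      rw [← inv_div]
      exact inv_anti₀ (by positivity) hy₁
    calc _ ≤ A / y ^ (n + 1) * min 1 (r * y) := hbound y hy₀
      _ ≤ A * (2 / x₀) ^ (n + 1) * (3 / 2 * min 1 (r * x₀)) := by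
        rw [div_eq_mul_inv, ← inv_pow]
        gcongr
        exact min_one_mul_le_mul_min_one hr (by norm_num) hy₂
      _ = _ := by ring
  have hpos : uIcc x₀ x ⊆ Ioi 0 := fun y hy => lt_of_lt_of_le (by positivity) (hI hy).1
  refine (norm_sub_taylorWithinEval_univ_le isOpen_Ioi hf hpos hderiv).trans ?_
  calc _ ≤ 3 / 2 * A * min 1 (r * x₀) * (2 / x₀) ^ (n + 1) * |x - x₀| ^ (n + 1) :=
        div_le_self (by positivity) (Nat.one_le_cast.2 n.factorial_pos)
    _ = _ := by rw [mul_div_right_comm, mul_pow]; ring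

theorem norm_sub_taylorWithinEval_univ_le_of_far (hA : 0 ≤ A) (hr : 0 ≤ r) (hx₀ : 0 < x₀)
    (hfx : ‖f x‖ ≤ A * min 1 (r * x))
    (hderiv : ∀ i ≤ n, ‖iteratedDeriv i f x₀‖ ≤ A / x₀ ^ i * min 1 (r * x₀))
    (hfar : x₀ / 2 < |x - x₀|) :
    ‖f x - taylorWithinEval f n univ x₀ x‖ ≤
      (n + 4) * A * min 1 (r * x₀) * (2 * |x - x₀| / x₀) ^ (n + 1) := by
  set m := min 1 (r * x₀)
  set s := 2 * |x - x₀| / x₀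
  have hs : 1 ≤ s := by rw [le_div_iff₀ hx₀]; linarith
  have hm : 0 ≤ m := le_min zero_le_one (by positivity)
  have hvalue : ‖f x‖ ≤ 3 * (A * m * s ^ (n + 1)) := by
    have hx : x ≤ 3 / 2 * s * x₀ := by
      have : s * x₀ = 2 * |x - x₀| := div_mul_cancel₀ _ hx₀.ne'
      linarith [le_abs_self (x - x₀)]
    calc ‖f x‖ ≤ A * (3 / 2 * s * m) :=
          hfx.trans (by gcongr; exact min_one_mul_le_mul_min_one hr (by linarith) hx)
      _ ≤ 3 * (A * m) * s ^ (n + 1) := by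
        rw [show A * (3 / 2 * s * m) = 3 / 2 * (A * m) * s by ring]
        gcongr
        · norm_num
        · exact le_self_pow₀ hs n.succ_ne_zero
      _ = 3 * (A * m * s ^ (n + 1)) := by ring
  have hterm : ∀ i ∈ Finset.range (n + 1),
      ‖iteratedDeriv i f x₀‖ * |x - x₀| ^ i ≤ A * m * s ^ (n + 1) := by
    intro i hi
    have hi : i ≤ n := Nat.lt_succ_iff.1 (Finset.mem_range.1 hi)
    calc _ ≤ A / x₀ ^ i * m * |x - x₀| ^ i := by gcongr; exact hderiv i hi
      _ = A * m * (|x - x₀| / x₀) ^ i := by rw [div_pow]; ring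
      _ ≤ A * m * s ^ (n + 1) := by
        gcongr
        calc (|x - x₀| / x₀) ^ i ≤ s ^ i := by
              gcongr
              exact div_le_div_of_nonneg_right (le_mul_of_one_le_left (abs_nonneg _) one_le_two)
                hx₀.le
          _ ≤ s ^ (n + 1) := pow_le_pow_right₀ hs (by omega)
  calc _ ≤ ‖f x‖ + ‖taylorWithinEval f n univ x₀ x‖ := norm_sub_le _ _
    _ ≤ 3 * (A * m * s ^ (n + 1)) + ∑ _i ∈ Finset.range (n + 1), A * m * s ^ (n + 1) :=
      add_le_add hvalue ((norm_taylorWithinEval_univ_le f n x₀ x).trans (Finset.sum_le_sum hterm))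
    _ = (n + 4) * A * m * s ^ (n + 1) := by
      rw [Finset.sum_const, Finset.card_range, nsmul_eq_mul]
      push_cast
      ring

end SymbolBound

/-- Quantitative Taylor remainder estimate: if `|a^{(j)}(θ)| ≤ A θ^{-j}(1 ∧ rθ)` for
`0 ≤ j ≤ k` on `(0,∞)`, then the Taylor remainder
`E(θ) = a(θ) - a(λ) - ∑_{ℓ=1}^{k-1} a^{(ℓ)}(λ)(θ-λ)^ℓ/ℓ!` satisfies
`|E(θ)| ≲_k A (1 ∧ rλ) |((θ-λ)/λ)|^k` for all `θ > 0`. -/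
theorem taylor_remainder_bound (k : ℕ) (hk : 1 ≤ k) :
    ∃ C > 0, ∀ (a : ℝ → ℂ) (A r lam : ℝ), 0 < A → 0 < r → 0 < lam →
      ContDiffOn ℝ k a (Ioi 0) →
      (∀ j ≤ k, ∀ θ : ℝ, 0 < θ →
        ‖iteratedDeriv j a θ‖ ≤ A * θ ^ (-(j : ℝ)) * min 1 (r * θ)) →
      ∀ θ : ℝ, 0 < θ →
        ‖a θ - a lam -
            ∑ ℓ ∈ Finset.Icc 1 (k - 1),
              (iteratedDeriv ℓ a lam / (Nat.factorial ℓ : ℂ)) * ((θ : ℂ) - lam) ^ ℓ‖ ≤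
          C * A * min 1 (r * lam) * (|θ - lam| / lam) ^ k := by
  obtain ⟨n, rfl⟩ : ∃ n, k = n + 1 := ⟨k - 1, by omega⟩
  refine ⟨(n + 4) * 2 ^ (n + 1), by positivity, ?_⟩
  intro a A r lam hA hr hlam ha hbound θ hθ
  have hbound' : ∀ j ≤ n + 1, ∀ y, 0 < y → ‖iteratedDeriv j a y‖ ≤ A / y ^ j * min 1 (r * y) :=
    fun j hj y hy => by simpa [Real.rpow_neg hy.le, div_eq_mul_inv] using hbound j hj y hy
  rw [Nat.add_sub_cancel, sub_sub, ← taylorWithinEval_univ_eq_add_sum_Icc,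
    show (n + 4) * 2 ^ (n + 1) * A * min 1 (r * lam) * (|θ - lam| / lam) ^ (n + 1) =
      (n + 4) * A * min 1 (r * lam) * (2 * |θ - lam| / lam) ^ (n + 1) by
      rw [mul_div_assoc, mul_pow]; ring]
  rcases le_or_gt |θ - lam| (lam / 2) with hnear | hfar
  · refine (norm_sub_taylorWithinEval_univ_le_of_near hA.le hr.le hlam (mod_cast ha)
      (hbound' (n + 1) le_rfl) hnear).trans ?_
    gcongr
    linarith [(n.cast_nonneg : (0 : ℝ) ≤ n)]
  · exact norm_sub_taylorWithinEval_univ_le_of_far hA.le hr.le hlam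
      (by simpa using hbound' 0 (Nat.zero_le _) θ hθ)
      (fun i hi => hbound' i (by omega) lam hlam) hfar
end
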